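/- arXiv:1404.1678 — 4 statements merged into one kernel-verified Lean document; each statement's English description precedes it below -/
import Mathlib

section
/- If A ∈ ℝ^{n×n} is invertible and ‖A⁻¹‖₂ < 1 (operator norm induced by the Euclidean norm), then the absolute value equation A x - |x| = b has a unique solution x* for every b ∈ ℝⁿ. -/
open scoped Matrix.Norms.L2Operator

noncomputable def enorm {n : ℕ} (v : Fin n → ℝ) : ℝ :=
  ‖(EuclideanSpace.equiv (Fin n) ℝ).symm v‖

def absVec {n : ℕ} (x : Fin n → ℝ) : Fin n → ℝ := fun i => |x i|

/-!
`A x - |x| = b` is the fixed-point equation `x = A⁻¹ (|x| + b)`. Componentwise `|·|` is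
1-Lipschitz for the Euclidean norm, so the right-hand side is a contraction of `ℝⁿ` with constant
`‖A⁻¹‖₂ < 1`, and the Banach fixed-point theorem gives exactly one solution.
-/

open Function Matrix

theorem ContractingWith.existsUnique_isFixedPt {α : Type*} [MetricSpace α] [CompleteSpace α]
    [Nonempty α] {K : NNReal} {f : α → α} (hf : ContractingWith K f) : ∃! x, IsFixedPt f x :=
  ⟨_, hf.fixedPoint_isFixedPt, fun _ hx => hf.fixedPoint_unique hx⟩

theorem EuclideanSpace.lipschitzWith_one_abs {ι : Type*} [Fintype ι] :
    LipschitzWith 1 fun x : EuclideanSpace ℝ ι => WithLp.toLp 2 fun i => |x i| := by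
  refine LipschitzWith.of_dist_le_mul fun x y => ?_
  simp only [NNReal.coe_one, one_mul, EuclideanSpace.dist_eq, Real.dist_eq]
  refine Real.sqrt_le_sqrt (Finset.sum_le_sum fun i _ => sq_le_sq.mpr ?_)
  simpa using abs_abs_sub_abs_le_abs_sub (x i) (y i)

namespace Matrix

theorem lipschitzWith_l2_opNNNorm_mulVec {m n : Type*} [Fintype m] [Fintype n] [DecidableEq n]
    (M : Matrix m n ℝ) :
    LipschitzWith ‖M‖₊ fun x : EuclideanSpace ℝ n => WithLp.toLp 2 (M *ᵥ x.ofLp) :=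
  LipschitzWith.of_dist_le_mul fun x y => by
    simpa [dist_eq_norm, mulVec_sub] using M.l2_opNorm_mulVec (x - y)

theorem inv_mulVec_eq_iff {n R : Type*} [Fintype n] [DecidableEq n] [CommRing R]
    {A : Matrix n n R} (hA : IsUnit A) {u v : n → R} : A⁻¹ *ᵥ u = v ↔ u = A *ᵥ v := by
  have := hA.invertible
  constructor
  · rintro rfl; rw [mulVec_mulVec, mul_inv_of_invertible, one_mulVec]
  · rintro rfl; rw [mulVec_mulVec, inv_mul_of_invertible, one_mulVec]

end Matrix

section AbsoluteValueEquation

variable {ι : Type*} [Fintype ι] [DecidableEq ι]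

noncomputable def aveFixedPointMap (A : Matrix ι ι ℝ) (b : ι → ℝ)
    (x : EuclideanSpace ℝ ι) : EuclideanSpace ℝ ι :=
  WithLp.toLp 2 (A⁻¹ *ᵥ ((fun i => |x i|) + b))

theorem lipschitzWith_aveFixedPointMap (A : Matrix ι ι ℝ) (b : ι → ℝ) :
    LipschitzWith ‖A⁻¹‖₊ (aveFixedPointMap A b) := by
  have h := A⁻¹.lipschitzWith_l2_opNNNorm_mulVec.comp
    (EuclideanSpace.lipschitzWith_one_abs.add (LipschitzWith.const (WithLp.toLp 2 b)))
  rw [add_zero, mul_one] at h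
  exact h

theorem isFixedPt_aveFixedPointMap_iff {A : Matrix ι ι ℝ} (hA : IsUnit A) (b x : ι → ℝ) :
    IsFixedPt (aveFixedPointMap A b) (WithLp.toLp 2 x) ↔ A *ᵥ x - (fun i => |x i|) = b := by
  rw [IsFixedPt, aveFixedPointMap, (WithLp.toLp_injective 2).eq_iff, inv_mulVec_eq_iff hA,
    eq_comm, sub_eq_iff_eq_add']

end AbsoluteValueEquation

/-- If `A` is invertible and `‖A⁻¹‖₂ < 1` (spectral norm), then the AVE
`A x - |x| = b` has a unique solution for every right-hand side `b`. -/
theorem ave_existsUnique {n : ℕ} (A : Matrix (Fin n) (Fin n) ℝ)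
    (hA : IsUnit A) (hnorm : ‖A⁻¹‖ < 1) (b : Fin n → ℝ) :
    ∃! x : Fin n → ℝ, A.mulVec x - absVec x = b := by
  have hT : ContractingWith ‖A⁻¹‖₊ (aveFixedPointMap A b) :=
    ⟨mod_cast hnorm, lipschitzWith_aveFixedPointMap A b⟩
  exact ((WithLp.equiv 2 _).symm.existsUnique_congr
    fun x => (isFixedPt_aveFixedPointMap_iff hA b x).symm).mpr hT.existsUnique_isFixedPt
end

section
/- Every Toeplitz matrix A ∈ ℂ^{n×n} with entries A_{jk} = a_{j-k} admits the splitting A = C + S, where C is the circulant matrix with first column entries C_{j0} = (a_j + a_{j-n})/2 for 1 ≤ j ≤ n-1 and C_{00} = a_0/2, and S is the skew-circulant matrix with first column entries S_{j0} = (a_j - a_{j-n})/2 for 1 ≤ j ≤ n-1 and S_{00} = a_0/2; moreover, this decomposition of A into a circulant plus a skew-circulant matrix with equal diagonal entries a_0/2 is uniquely determined by A. -/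
/-- The circulant/skew-circulant splitting of a Toeplitz matrix, together with its
uniqueness once the diagonal entries are prescribed to be `a 0 / 2`. -/
theorem toeplitz_cscs_splitting {n : ℕ} (hn : 0 < n) (a : ℤ → ℂ)
    (A C S : Matrix (Fin n) (Fin n) ℂ)
    (hA : ∀ j k : Fin n, A j k = a ((j : ℤ) - (k : ℤ)))
    (hC : ∀ j k : Fin n, C j k =
      if (j : ℤ) - (k : ℤ) = 0 then a 0 / 2
      else if 0 < (j : ℤ) - (k : ℤ) then (a ((j : ℤ) - (k : ℤ)) + a ((j : ℤ) - (k : ℤ) - n)) / 2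
      else (a ((j : ℤ) - (k : ℤ)) + a ((j : ℤ) - (k : ℤ) + n)) / 2)
    (hS : ∀ j k : Fin n, S j k =
      if (j : ℤ) - (k : ℤ) = 0 then a 0 / 2
      else if 0 < (j : ℤ) - (k : ℤ) then (a ((j : ℤ) - (k : ℤ)) - a ((j : ℤ) - (k : ℤ) - n)) / 2
      else (a ((j : ℤ) - (k : ℤ)) - a ((j : ℤ) - (k : ℤ) + n)) / 2) :
    -- the splitting
    A = C + S ∧
    -- `C` is circulant
    C = Matrix.circulant (fun i : Fin n => C i ⟨0, hn⟩) ∧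
    -- `S` is skew-circulant: entries on wrapped-around diagonals are negated
    (∀ j k : Fin n, ((k : ℕ) ≤ (j : ℕ) → S j k = S (j - k) ⟨0, hn⟩) ∧
      ((j : ℕ) < (k : ℕ) → S j k = - S (j - k) ⟨0, hn⟩)) ∧
    -- uniqueness: any circulant + skew-circulant splitting with diagonal `a 0 / 2` agrees
    (∀ C' S' : Matrix (Fin n) (Fin n) ℂ,
      A = C' + S' →
      C' = Matrix.circulant (fun i : Fin n => C' i ⟨0, hn⟩) →
      (∀ j k : Fin n, ((k : ℕ) ≤ (j : ℕ) → S' j k = S' (j - k) ⟨0, hn⟩) ∧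
        ((j : ℕ) < (k : ℕ) → S' j k = - S' (j - k) ⟨0, hn⟩)) →
      C' ⟨0, hn⟩ ⟨0, hn⟩ = a 0 / 2 →
      C' = C ∧ S' = S) := by
  set z : Fin n := ⟨0, hn⟩ with hz
  have hzv : ((z : ℕ) : ℤ) = 0 := by simp [hz]
  -- value of Fin subtraction
  have hsuble : ∀ j k : Fin n, (k : ℕ) ≤ (j : ℕ) →
      (((j - k : Fin n) : ℕ) : ℤ) = (j : ℤ) - (k : ℤ) := by
    intro j k h
    rw [Fin.sub_def]
    have hk := k.isLt; have hj := j.isLt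
    have h1 : n - (k : ℕ) + (j : ℕ) = ((j : ℕ) - (k : ℕ)) + n := by omega
    simp only [h1, Nat.add_mod_right, Nat.mod_eq_of_lt (show (j:ℕ) - (k:ℕ) < n by omega)]
    push_cast [h]; ring
  have hsublt : ∀ j k : Fin n, (j : ℕ) < (k : ℕ) →
      (((j - k : Fin n) : ℕ) : ℤ) = (j : ℤ) - (k : ℤ) + n := by
    intro j k h
    rw [Fin.sub_def]
    have hk := k.isLt; have hj := j.isLt
    have h1 : n - (k : ℕ) + (j : ℕ) = (j : ℕ) + n - (k : ℕ) := by omega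
    simp only [h1, Nat.mod_eq_of_lt (show (j:ℕ) + n - (k:ℕ) < n by omega)]
    push_cast [show (k:ℕ) ≤ (j:ℕ) + n by omega]; ring
  have hbound : ∀ j k : Fin n, -(n : ℤ) < (j : ℤ) - (k : ℤ) ∧ (j : ℤ) - (k : ℤ) < n := by
    intro j k
    have hk := k.isLt; have hj := j.isLt
    constructor <;> [nlinarith [Int.ofNat_lt.mpr hk, Int.ofNat_nonneg (j:ℕ)];
      nlinarith [Int.ofNat_lt.mpr hj, Int.ofNat_nonneg (k:ℕ)]]
  -- splitting
  have part1 : A = C + S := by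
    ext j k
    simp only [Matrix.add_apply, hA, hC, hS]
    rcases lt_trichotomy ((j:ℤ) - (k:ℤ)) 0 with h | h | h
    · rw [if_neg (by omega), if_neg (not_lt.mpr h.le), if_neg (by omega),
        if_neg (not_lt.mpr h.le)]; ring
    · rw [if_pos h, if_pos h, h]; ring
    · rw [if_neg (by omega), if_pos h, if_neg (by omega), if_pos h]; ring
  -- C is circulant
  have part2 : C = Matrix.circulant (fun i : Fin n => C i z) := by
    ext j k
    rw [Matrix.circulant_apply]
    rcases le_or_gt (k : ℕ) (j : ℕ) with h | h
    · have hd : (((j - k : Fin n) : ℕ) : ℤ) - ((z : ℕ) : ℤ) = (j : ℤ) - (k : ℤ) := by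
        rw [hzv, hsuble j k h]; ring
      rw [hC j k, hC (j - k) z, hd]
    · have hd : (((j - k : Fin n) : ℕ) : ℤ) - ((z : ℕ) : ℤ) = (j : ℤ) - (k : ℤ) + n := by
        rw [hzv, hsublt j k h]; ring
      have hb := hbound j k
      have hlt : (j : ℤ) - (k : ℤ) < 0 := by
        have : ((j:ℕ) : ℤ) < ((k:ℕ) : ℤ) := Int.ofNat_lt.mpr h
        omega
      rw [hC j k, hC (j - k) z, hd, if_neg (by omega), if_neg (not_lt.mpr hlt.le),
        if_neg (by omega), if_pos (by omega)]
      have : (j : ℤ) - (k : ℤ) + n - n = (j : ℤ) - (k : ℤ) := by ring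
      rw [this]; ring
  -- S is skew-circulant
  have part3 : ∀ j k : Fin n, ((k : ℕ) ≤ (j : ℕ) → S j k = S (j - k) z) ∧
      ((j : ℕ) < (k : ℕ) → S j k = - S (j - k) z) := by
    intro j k
    constructor
    · intro h
      have hd : (((j - k : Fin n) : ℕ) : ℤ) - ((z : ℕ) : ℤ) = (j : ℤ) - (k : ℤ) := by
        rw [hzv, hsuble j k h]; ring
      rw [hS j k, hS (j - k) z, hd]
    · intro h
      have hd : (((j - k : Fin n) : ℕ) : ℤ) - ((z : ℕ) : ℤ) = (j : ℤ) - (k : ℤ) + n := by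
        rw [hzv, hsublt j k h]; ring
      have hb := hbound j k
      have hlt : (j : ℤ) - (k : ℤ) < 0 := by
        have : ((j:ℕ) : ℤ) < ((k:ℕ) : ℤ) := Int.ofNat_lt.mpr h
        omega
      rw [hS j k, hS (j - k) z, hd, if_neg (by omega), if_neg (not_lt.mpr hlt.le),
        if_neg (by omega), if_pos (by omega)]
      have : (j : ℤ) - (k : ℤ) + n - n = (j : ℤ) - (k : ℤ) := by ring
      rw [this]; ring
  refine ⟨part1, part2, part3, ?_⟩
  -- uniqueness
  intro C' S' hsplit hcirc hskew hdiag
  -- first column of C' agrees with that of C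
  have hcol : ∀ m : Fin n, C' m z = C m z := by
    intro m
    have heq1 : a ((m : ℕ) : ℤ) = C' m z + S' m z := by
      have h1 := congrFun (congrFun hsplit m) z
      rw [hA] at h1
      simpa [hzv] using h1
    rcases Nat.eq_zero_or_pos (m : ℕ) with hm0 | hmpos
    · have hmz' : m = z := Fin.ext (by simpa [hz] using hm0)
      rw [hmz', hC z z, if_pos (sub_self (((z : ℕ) : ℤ)))]
      exact hdiag
    · set k : Fin n := ⟨n - (m : ℕ), by omega⟩ with hk
      have hml := m.isLt
      have hzk : (z : ℕ) < (k : ℕ) := by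
        simp only [hz, hk]; omega
      have hkv : ((k : ℕ) : ℤ) = (n : ℤ) - ((m : ℕ) : ℤ) := by
        simp only [hk]; omega
      have hzkfin : z - k = m := by
        apply Fin.ext
        have h2 := hsublt z k hzk
        omega
      have heq2 : a (((m : ℕ) : ℤ) - n) = C' m z - S' m z := by
        have hCzk : C' z k = C' m z := by
          conv_lhs => rw [hcirc]
          simp only [Matrix.circulant_apply, hzkfin]
        have hSzk : S' z k = - S' m z := by
          rw [(hskew z k).2 hzk, hzkfin]
        have harg : ((z : ℕ) : ℤ) - ((k : ℕ) : ℤ) = ((m : ℕ) : ℤ) - n := by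
          rw [hzv, hkv]; ring
        have h1 := congrFun (congrFun hsplit z) k
        rw [hA z k, harg, Matrix.add_apply, hCzk, hSzk] at h1
        linear_combination h1
      have hCm : C' m z = (a ((m : ℕ) : ℤ) + a (((m : ℕ) : ℤ) - n)) / 2 := by
        linear_combination -(heq1 + heq2) / 2
      have hmd : ((m : ℕ) : ℤ) - ((z : ℕ) : ℤ) = ((m : ℕ) : ℤ) := by rw [hzv]; ring
      rw [hCm, hC m z, hmd, if_neg (by omega), if_pos (by omega)]
  have hCeq : C' = C := by
    ext j k
    have h1 : C' j k = C' (j - k) z := by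
      conv_lhs => rw [hcirc]
      simp only [Matrix.circulant_apply]
    have h2 : C j k = C (j - k) z := by
      conv_lhs => rw [part2]
      simp only [Matrix.circulant_apply]
    rw [h1, h2, hcol]
  have hSeq : S' = S := by
    have hScol : ∀ m : Fin n, S' m z = S m z := by
      intro m
      have h1 := congrFun (congrFun hsplit m) z
      have h2 := congrFun (congrFun part1 m) z
      simp only [Matrix.add_apply] at h1 h2
      rw [h2] at h1
      linear_combination -h1 - hcol m
    ext j k
    rcases le_or_gt (k : ℕ) (j : ℕ) with h | h
    · rw [(hskew j k).1 h, hScol, ((part3 j k).1 h)]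
    · rw [(hskew j k).2 h, hScol, ((part3 j k).2 h)]
  exact ⟨hCeq, hSeq⟩
end

section
/- Let C and S be normal matrices in ℂ^{n×n} all of whose eigenvalues have positive real part, and let σ > 0. Then the spectral radius of M(σ) = (σI + S)^{-1}(σI - C)(σI + C)^{-1}(σI - S) satisfies ρ(M(σ)) ≤ ‖(σI - C)(σI + C)^{-1}‖₂ · ‖(σI - S)(σI + S)^{-1}‖₂ < 1. -/
/-!
Write `X_A = (σ - A)(σ + A)⁻¹` for the Cayley transform. Moving the factor `(σ + S)⁻¹` from
the front of `M(σ)` to the back does not change the spectral radius, since `ab` and `ba` have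
the same nonzero spectrum; so `ρ(M(σ)) = ρ(X_C X_S) ≤ ‖X_C‖ ‖X_S‖`. For normal `A` the
transform `X_A` is normal, hence its norm equals its spectral radius, and its eigenvalues are
the images `(σ - z)/(σ + z)` of the eigenvalues `z` of `A`, which lie in the open unit disc
when `Re z > 0`.
-/

open Matrix Ring
open scoped Matrix.Norms.L2Operator

theorem Commute.ringInverse_right {M₀ : Type*} [MonoidWithZero M₀] {a b : M₀}
    (h : Commute a b) : Commute a b⁻¹ʳ := by
  by_cases hb : IsUnit b
  · obtain ⟨u, rfl⟩ := hb
    rw [Ring.inverse_unit]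
    exact h.units_inv_right
  · rw [Ring.inverse_non_unit _ hb]
    exact Commute.zero_right a

theorem spectrum.isUnit_algebraMap_add {R A : Type*} [CommRing R] [Ring A] [Algebra R A]
    {c : R} {a : A} (h : -c ∉ spectrum R a) : IsUnit (algebraMap R A c + a) := by
  have := (spectrum.notMem_iff.mp h).neg
  rwa [map_neg, neg_sub, sub_neg_eq_add, add_comm] at this

theorem spectralRadius_mul_comm {𝕜 A : Type*} [NormedField 𝕜] [Ring A] [Algebra 𝕜 A]
    (a b : A) : spectralRadius 𝕜 (a * b) = spectralRadius 𝕜 (b * a) := by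
  suffices h : ∀ x y : A, spectralRadius 𝕜 (x * y) ≤ spectralRadius 𝕜 (y * x) from
    le_antisymm (h a b) (h b a)
  intro x y
  refine iSup₂_le fun k hk => ?_
  rcases eq_or_ne k 0 with rfl | hk0
  · simp
  · have : k ∈ spectrum 𝕜 (y * x) \ {0} :=
      spectrum.nonzero_mul_comm (𝕜 := 𝕜) x y ▸ ⟨hk, hk0⟩
    exact le_iSup₂ (f := fun k (_ : k ∈ spectrum 𝕜 (y * x)) => (‖k‖₊ : ENNReal))
      k this.1

theorem Complex.norm_sub_div_add_lt_one {σ : ℝ} (hσ : 0 < σ) {z : ℂ} (hz : 0 < z.re) :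
    ‖((σ : ℂ) - z) / ((σ : ℂ) + z)‖ < 1 := by
  have hsq : ‖(σ : ℂ) - z‖ ^ 2 < ‖(σ : ℂ) + z‖ ^ 2 := by
    simp only [Complex.sq_norm, Complex.normSq_apply, Complex.sub_re, Complex.add_re,
      Complex.sub_im, Complex.add_im, Complex.ofReal_re, Complex.ofReal_im]
    nlinarith
  have hlt := (pow_lt_pow_iff_left₀ (norm_nonneg _) (norm_nonneg _) two_ne_zero).mp hsq
  rw [norm_div, div_lt_one (by linarith [norm_nonneg ((σ : ℂ) - z)])]
  exact hlt

section Cayley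

variable {𝕜 A : Type*} [Field 𝕜] [Ring A] [Algebra 𝕜 A]

noncomputable def cayley (c : 𝕜) (a : A) : A :=
  (algebraMap 𝕜 A c - a) * (algebraMap 𝕜 A c + a)⁻¹ʳ

theorem mem_spectrum_cayley [CharZero 𝕜] {c : 𝕜} (hc : c ≠ 0) {a : A}
    (ha : IsUnit (algebraMap 𝕜 A c + a)) {μ : 𝕜} (hμ : μ ∈ spectrum 𝕜 (cayley c a)) :
    ∃ z ∈ spectrum 𝕜 a, μ = (c - z) / (c + z) := by
  have hfactor : algebraMap 𝕜 A μ - cayley c a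
      = (algebraMap 𝕜 A ((μ - 1) * c) + (μ + 1) • a) * (algebraMap 𝕜 A c + a)⁻¹ʳ := by
    have : algebraMap 𝕜 A μ
        = algebraMap 𝕜 A μ * (algebraMap 𝕜 A c + a) * (algebraMap 𝕜 A c + a)⁻¹ʳ := by
      rw [mul_assoc, Ring.mul_inverse_cancel _ ha, mul_one]
    rw [cayley, this, ← sub_mul]
    congr 1
    simp only [map_mul, map_sub, map_one, Algebra.smul_def, map_add]
    noncomm_ring
  rw [spectrum.mem_iff, hfactor] at hμ
  have hμ' : ¬ IsUnit (algebraMap 𝕜 A ((μ - 1) * c) + (μ + 1) • a) :=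
    fun h => hμ (h.mul ha.ringInverse)
  have hμ1 : μ + 1 ≠ 0 := by
    rintro h
    obtain rfl : μ = -1 := eq_neg_of_add_eq_zero_left h
    refine hμ' ?_
    rw [h, zero_smul, add_zero]
    exact (IsUnit.mk0 _ (by simpa [hc] using (by norm_num : (-1 - 1 : 𝕜) ≠ 0))).map _
  -- `z` is the preimage of `μ` under the involution `z ↦ (c - z) / (c + z)`.
  refine ⟨(1 - μ) * c / (μ + 1), fun hz => hμ' ?_, ?_⟩
  · convert (hz.smul (Units.mk0 _ (neg_ne_zero.mpr hμ1))) using 1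
    rw [Units.smul_def, Units.val_mk0, Algebra.algebraMap_eq_smul_one,
      Algebra.algebraMap_eq_smul_one]
    match_scalars <;> field_simp; ring
  · have hcz : c + (1 - μ) * c / (μ + 1) = 2 * c / (μ + 1) := by
      field_simp
      ring
    rw [hcz]
    field_simp
    ring

variable [StarRing 𝕜] [StarRing A] [StarModule 𝕜 A]

theorem star_cayley {c : 𝕜} (hc : IsSelfAdjoint c) (a : A) :
    star (cayley c a) = (algebraMap 𝕜 A c + star a)⁻¹ʳ * (algebraMap 𝕜 A c - star a) := by
  rw [cayley, star_mul, ← Ring.inverse_star, star_add, star_sub, ← algebraMap_star_comm,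
    hc.star_eq]

theorem IsStarNormal.cayley {c : 𝕜} (hc : IsSelfAdjoint c) {a : A} (ha : IsStarNormal a) :
    IsStarNormal (cayley c a) := by
  have h : Commute a (star a) := ha.star_comm_self.symm
  have hc₁ := Algebra.commute_algebraMap_left c (algebraMap 𝕜 A c + star a)
  have hc₂ := Algebra.commute_algebraMap_left c (algebraMap 𝕜 A c - star a)
  have ha₁ := (Algebra.commute_algebraMap_right c a).add_right h
  have ha₂ := (Algebra.commute_algebraMap_right c a).sub_right h
  refine ⟨?_⟩
  rw [star_cayley hc, _root_.cayley]
  exact ((hc₁.sub_left ha₁).ringInverse_right.symm.mul_right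
      (hc₁.add_left ha₁).symm.ringInverse_ringInverse).mul_left
    ((hc₂.sub_left ha₂).symm.mul_right (hc₂.add_left ha₂).symm.ringInverse_right)

end Cayley

theorem norm_cayley_lt_one {A : Type*} [CStarAlgebra A] [Nontrivial A] {a : A}
    [IsStarNormal a] {σ : ℝ} (hσ : 0 < σ) (ha : ∀ z ∈ spectrum ℂ a, 0 < z.re) :
    ‖cayley (σ : ℂ) a‖ < 1 := by
  have hunit : IsUnit (algebraMap ℂ A σ + a) :=
    spectrum.isUnit_algebraMap_add fun h => by
      linarith [(ha _ h).trans_eq (show (-(σ : ℂ)).re = -σ by simp)]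
  have := IsStarNormal.cayley (Complex.conj_ofReal σ) ‹IsStarNormal a›
  have hρ : spectralRadius ℂ (cayley (σ : ℂ) a) < (1 : NNReal) :=
    spectrum.spectralRadius_lt_of_forall_lt _ fun μ hμ => by
      obtain ⟨z, hz, rfl⟩ := mem_spectrum_cayley (by exact_mod_cast hσ.ne') hunit hμ
      exact_mod_cast Complex.norm_sub_div_add_lt_one hσ (ha z hz)
  rw [IsStarNormal.spectralRadius_eq_nnnorm] at hρ
  exact_mod_cast hρ

/-- For normal matrices `C`, `S` whose eigenvalues all have positive real part and `σ > 0`,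
the spectral radius of the CSCS iteration matrix `M(σ) = (σI+S)⁻¹(σI-C)(σI+C)⁻¹(σI-S)`
is bounded by `‖(σI - C)(σI + C)⁻¹‖₂ * ‖(σI - S)(σI + S)⁻¹‖₂`, which is less than one. -/
theorem cscs_spectral_radius_lt_one {n : ℕ} (hn : 0 < n) (σ : ℝ) (hσ : 0 < σ)
    (C S Cp Cm Sp Sm : Matrix (Fin n) (Fin n) ℂ)
    (hCp : Cp = (σ : ℂ) • (1 : Matrix (Fin n) (Fin n) ℂ) + C)
    (hCm : Cm = (σ : ℂ) • (1 : Matrix (Fin n) (Fin n) ℂ) - C)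
    (hSp : Sp = (σ : ℂ) • (1 : Matrix (Fin n) (Fin n) ℂ) + S)
    (hSm : Sm = (σ : ℂ) • (1 : Matrix (Fin n) (Fin n) ℂ) - S)
    (hCnormal : C * Cᴴ = Cᴴ * C) (hSnormal : S * Sᴴ = Sᴴ * S)
    (hCeig : ∀ z ∈ spectrum ℂ C, 0 < z.re)
    (hSeig : ∀ z ∈ spectrum ℂ S, 0 < z.re) :
    spectralRadius ℂ (Sp⁻¹ * Cm * Cp⁻¹ * Sm)
      ≤ ENNReal.ofReal (‖Cm * Cp⁻¹‖ * ‖Sm * Sp⁻¹‖)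
    ∧ ‖Cm * Cp⁻¹‖ * ‖Sm * Sp⁻¹‖ < 1 := by
  have : NeZero n := ⟨hn.ne'⟩
  have hC : Cm * Cp⁻¹ = cayley (σ : ℂ) C := by
    rw [hCm, hCp, cayley, Algebra.algebraMap_eq_smul_one, nonsing_inv_eq_ringInverse]
  have hS : Sm * Sp⁻¹ = cayley (σ : ℂ) S := by
    rw [hSm, hSp, cayley, Algebra.algebraMap_eq_smul_one, nonsing_inv_eq_ringInverse]
  have : IsStarNormal C := ⟨hCnormal.symm⟩
  have : IsStarNormal S := ⟨hSnormal.symm⟩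
  have hCnorm : ‖Cm * Cp⁻¹‖ < 1 := hC ▸ norm_cayley_lt_one hσ hCeig
  have hSnorm : ‖Sm * Sp⁻¹‖ < 1 := hS ▸ norm_cayley_lt_one hσ hSeig
  refine ⟨?_, mul_lt_one_of_nonneg_of_lt_one_left (norm_nonneg _) hCnorm hSnorm.le⟩
  calc spectralRadius ℂ (Sp⁻¹ * Cm * Cp⁻¹ * Sm)
      = spectralRadius ℂ (Cm * Cp⁻¹ * (Sm * Sp⁻¹)) := by
        rw [mul_assoc, mul_assoc, spectralRadius_mul_comm]
        simp only [mul_assoc]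
    _ ≤ ‖Cm * Cp⁻¹ * (Sm * Sp⁻¹)‖ₑ := spectrum.spectralRadius_le_nnnorm _
    _ ≤ ENNReal.ofReal (‖Cm * Cp⁻¹‖ * ‖Sm * Sp⁻¹‖) := by
        rw [← ofReal_norm]
        exact ENNReal.ofReal_le_ofReal (norm_mul_le _ _)
end

section
/- Let D be a diagonal matrix with diagonal entries of absolute value at most 1 and let σ > 0 with σI + C, σI + S invertible. With ξ = max{‖(σI - S)(σI + S)^{-1}‖₂, ‖(σI - C)(σI + C)^{-1}‖₂} and δ = max{‖(σI + C)^{-1}‖₂, ‖(σI + S)^{-1}‖₂}, the matrix M(σ, D) = (σI + S)^{-1}(σI - C + D)(σI + C)^{-1}(σI - S + D) satisfies ‖(σI + S) M(σ, D) (σI + S)^{-1}‖₂ ≤ (ξ + δ)², and hence ρ(M(σ, D)) ≤ (ξ + δ)²; in particular ρ(M(σ, D)) < 1 whenever δ < 1 - ξ. -/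
open scoped Matrix.Norms.L2Operator

/-!
Conjugating by `σI + S` turns `M` into the product of `(σI - C + D)(σI + C)⁻¹` and
`(σI - S + D)(σI + S)⁻¹`. Splitting off `D`, each factor has norm at most `ξ + ‖D‖ δ ≤ ξ + δ`,
so the conjugate has norm at most `(ξ + δ)²`. The spectral radius is invariant under
conjugation and bounded by the norm.
-/

lemma norm_add_mul_le_of_norm_le_one {A : Type*} [SeminormedRing A] {D : A}
    (hD : ‖D‖ ≤ 1) (X Y : A) : ‖(X + D) * Y‖ ≤ ‖X * Y‖ + ‖Y‖ :=
  calc ‖(X + D) * Y‖ ≤ ‖X * Y‖ + ‖D * Y‖ := by rw [add_mul]; exact norm_add_le _ _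
    _ ≤ ‖X * Y‖ + ‖D‖ * ‖Y‖ := by gcongr; exact norm_mul_le _ _
    _ ≤ ‖X * Y‖ + ‖Y‖ := by gcongr; exact mul_le_of_le_one_left (norm_nonneg _) hD

lemma spectralRadius_units_conjugate {𝕜 A : Type*} [NormedField 𝕜] [Ring A] [Algebra 𝕜 A]
    (a : A) (u : Aˣ) : spectralRadius 𝕜 (↑u * a * ↑u⁻¹) = spectralRadius 𝕜 a := by
  rw [spectralRadius, spectrum.units_conjugate, spectralRadius]

/-- Unlike `spectrum.spectralRadius_le_nnnorm`, this needs no `NormOneClass`, so it also covers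
the zero ring (matrices of size `0`). -/
lemma spectralRadius_le_nnnorm_of_norm_one_le_one {𝕜 A : Type*} [NormedField 𝕜] [NormedRing A]
    [NormedAlgebra 𝕜 A] [CompleteSpace A] (h1 : ‖(1 : A)‖ ≤ 1) (a : A) :
    spectralRadius 𝕜 a ≤ ‖a‖₊ := by
  refine iSup₂_le fun k hk => ?_
  have hk' : ‖k‖ ≤ ‖a‖ :=
    (spectrum.norm_le_norm_mul_of_mem hk).trans (mul_le_of_le_one_right (norm_nonneg _) h1)
  exact_mod_cast hk'

namespace Matrix

variable {n 𝕜 : Type*} [Fintype n] [DecidableEq n] [RCLike 𝕜]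

lemma l2_opNorm_diagonal_le_one {v : n → 𝕜} (hv : ∀ i, ‖v i‖ ≤ 1) :
    ‖(diagonal v : Matrix n n 𝕜)‖ ≤ 1 := by
  rw [l2_opNorm_diagonal]
  exact pi_norm_le_iff_of_nonneg zero_le_one |>.mpr hv

lemma l2_opNorm_one_le_one : ‖(1 : Matrix n n 𝕜)‖ ≤ 1 :=
  l2_opNorm_diagonal_le_one fun _ => norm_one.le

end Matrix

theorem smoothed_cscs_matrix_bound_general {n : ℕ} (σ : ℝ)
    (C S : Matrix (Fin n) (Fin n) ℂ) (d : Fin n → ℂ)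
    (hd : ∀ i, ‖d i‖ ≤ 1)
    (hS : IsUnit ((σ : ℂ) • (1 : Matrix (Fin n) (Fin n) ℂ) + S))
    (ξ δ : ℝ)
    (hξ : ξ = max ‖((σ : ℂ) • (1 : Matrix (Fin n) (Fin n) ℂ) - S) *
                    ((σ : ℂ) • (1 : Matrix (Fin n) (Fin n) ℂ) + S)⁻¹‖
               ‖((σ : ℂ) • (1 : Matrix (Fin n) (Fin n) ℂ) - C) *
                    ((σ : ℂ) • (1 : Matrix (Fin n) (Fin n) ℂ) + C)⁻¹‖)
    (hδ : δ = max ‖((σ : ℂ) • (1 : Matrix (Fin n) (Fin n) ℂ) + C)⁻¹‖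
               ‖((σ : ℂ) • (1 : Matrix (Fin n) (Fin n) ℂ) + S)⁻¹‖)
    (M : Matrix (Fin n) (Fin n) ℂ)
    (hM : M = ((σ : ℂ) • (1 : Matrix (Fin n) (Fin n) ℂ) + S)⁻¹ *
        ((σ : ℂ) • (1 : Matrix (Fin n) (Fin n) ℂ) - C + Matrix.diagonal d) *
        ((σ : ℂ) • (1 : Matrix (Fin n) (Fin n) ℂ) + C)⁻¹ *
        ((σ : ℂ) • (1 : Matrix (Fin n) (Fin n) ℂ) - S + Matrix.diagonal d)) :
    ‖((σ : ℂ) • (1 : Matrix (Fin n) (Fin n) ℂ) + S) * M *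
        ((σ : ℂ) • (1 : Matrix (Fin n) (Fin n) ℂ) + S)⁻¹‖ ≤ (ξ + δ) ^ 2 ∧
    spectralRadius ℂ M ≤ ENNReal.ofReal ((ξ + δ) ^ 2) ∧
    (δ < 1 - ξ → spectralRadius ℂ M < 1) := by
  set I : Matrix (Fin n) (Fin n) ℂ := (σ : ℂ) • 1
  obtain ⟨u, hu⟩ := hS
  have hinv : (I + S)⁻¹ = ↑u⁻¹ := by
    rw [← hu, Matrix.nonsing_inv_eq_ringInverse, Ring.inverse_unit]
  have hconj : (I + S) * M * (I + S)⁻¹ =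
      ((I - C + Matrix.diagonal d) * (I + C)⁻¹) * ((I - S + Matrix.diagonal d) * (I + S)⁻¹) := by
    rw [hM, hinv, ← hu]; simp only [mul_assoc, Units.mul_inv_cancel_left]
  have hξ0 : 0 ≤ ξ := hξ ▸ le_max_of_le_left (norm_nonneg _)
  have hδ0 : 0 ≤ δ := hδ ▸ le_max_of_le_left (norm_nonneg _)
  have hnorm : ‖(I + S) * M * (I + S)⁻¹‖ ≤ (ξ + δ) ^ 2 := by
    have hD := Matrix.l2_opNorm_diagonal_le_one hd
    rw [hconj, sq]
    refine (norm_mul_le _ _).trans (mul_le_mul ?_ ?_ (norm_nonneg _) (by positivity)) <;>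
      refine (norm_add_mul_le_of_norm_le_one hD _ _).trans (add_le_add ?_ ?_) <;>
      simp only [hξ, hδ, le_max_left, le_max_right]
  have hrad : spectralRadius ℂ M ≤ ENNReal.ofReal ((ξ + δ) ^ 2) := by
    rw [← spectralRadius_units_conjugate M u, hu, ← hinv]
    refine (spectralRadius_le_nnnorm_of_norm_one_le_one Matrix.l2_opNorm_one_le_one _).trans ?_
    rw [← ENNReal.ofReal_coe_nnreal, coe_nnnorm]
    exact ENNReal.ofReal_le_ofReal hnorm
  refine ⟨hnorm, hrad, fun hlt => hrad.trans_lt ?_⟩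
  rw [← ENNReal.ofReal_one, ENNReal.ofReal_lt_ofReal_iff one_pos]
  nlinarith

/-- For a diagonal matrix `D` with entries of modulus at most one, the smoothed CSCS
iteration matrix `M(σ, D) = (σI + S)⁻¹(σI - C + D)(σI + C)⁻¹(σI - S + D)` satisfies
`‖(σI + S) M (σI + S)⁻¹‖₂ ≤ (ξ + δ)²`, hence `ρ(M) ≤ (ξ + δ)²`, which is `< 1`
when `δ < 1 - ξ`. -/
theorem smoothed_cscs_matrix_bound {n : ℕ} (σ : ℝ) (hσ : 0 < σ)
    (C S : Matrix (Fin n) (Fin n) ℂ) (d : Fin n → ℂ)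
    (hd : ∀ i, ‖d i‖ ≤ 1)
    (hC : IsUnit ((σ : ℂ) • (1 : Matrix (Fin n) (Fin n) ℂ) + C))
    (hS : IsUnit ((σ : ℂ) • (1 : Matrix (Fin n) (Fin n) ℂ) + S))
    (ξ δ : ℝ)
    (hξ : ξ = max ‖((σ : ℂ) • (1 : Matrix (Fin n) (Fin n) ℂ) - S) *
                    ((σ : ℂ) • (1 : Matrix (Fin n) (Fin n) ℂ) + S)⁻¹‖
               ‖((σ : ℂ) • (1 : Matrix (Fin n) (Fin n) ℂ) - C) *
                    ((σ : ℂ) • (1 : Matrix (Fin n) (Fin n) ℂ) + C)⁻¹‖)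
    (hδ : δ = max ‖((σ : ℂ) • (1 : Matrix (Fin n) (Fin n) ℂ) + C)⁻¹‖
               ‖((σ : ℂ) • (1 : Matrix (Fin n) (Fin n) ℂ) + S)⁻¹‖)
    (M : Matrix (Fin n) (Fin n) ℂ)
    (hM : M = ((σ : ℂ) • (1 : Matrix (Fin n) (Fin n) ℂ) + S)⁻¹ *
        ((σ : ℂ) • (1 : Matrix (Fin n) (Fin n) ℂ) - C + Matrix.diagonal d) *
        ((σ : ℂ) • (1 : Matrix (Fin n) (Fin n) ℂ) + C)⁻¹ *
        ((σ : ℂ) • (1 : Matrix (Fin n) (Fin n) ℂ) - S + Matrix.diagonal d)) :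
    ‖((σ : ℂ) • (1 : Matrix (Fin n) (Fin n) ℂ) + S) * M *
        ((σ : ℂ) • (1 : Matrix (Fin n) (Fin n) ℂ) + S)⁻¹‖ ≤ (ξ + δ) ^ 2 ∧
    spectralRadius ℂ M ≤ ENNReal.ofReal ((ξ + δ) ^ 2) ∧
    (δ < 1 - ξ → spectralRadius ℂ M < 1) :=
  smoothed_cscs_matrix_bound_general σ C S d hd hS ξ δ hξ hδ M hM
end
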